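/- With K⁺ = Σ_{i=2}^{2'} e_{i1} ⊗ e_{i'1'} (−1)^{\bar{i}} θ_i and K⁻ = −Σ_{i=2}^{2'} e_{i1'} ⊗ e_{i'1} (−1)^{\bar{i}} θ_i, one has K⁺ P = K⁻ and K⁺ Q = −\bar{Q} − K, where P = Σ_{i,j=1}^{N+2m} e_{ij}⊗e_{ji}(−1)^{\bar{j}}, Q = Σ_{i,j=1}^{N+2m} e_{ij}⊗e_{i'j'}(−1)^{\bar{i}\bar{j}}θ_iθ_j, \bar{Q} = Σ_{i,j=2}^{2'} e_{ij}⊗e_{i'j'}(−1)^{\bar{i}\bar{j}}θ_iθ_j, and K = K⁺ + K⁻. -/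

import Mathlib

/-!
STATEMENT 16: `K⁺ P = K⁻` and `K⁺ Q = −Q̄ − K` (with `K = K⁺ + K⁻`), where
the super tensor square of `End ℂ^{N|2m}` (with the Koszul sign rule) is
realized faithfully via its action on `ℂ^{N|2m} ⊗ ℂ^{N|2m}`:
`(a ⊗ b)(v ⊗ w) = (−1)^{p(b)p(v)} av ⊗ bw`.
Indices are 0-based: `1 ↦ 0`, `1' ↦ N+2m−1`, `2,…,2'` becomes `1 ≤ i ≤ N+2m−2`.
-/

noncomputable section
namespace OSp
open Matrix

variable (N m : ℕ)

/-- the parity `\bar i`. -/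
def pbar (i : Fin (N + 2*m)) : ℕ :=
  if i.val < m ∨ N + m ≤ i.val then 1 else 0

/-- the sign `θ_i`. -/
def th (i : Fin (N + 2*m)) : ℂ :=
  if i.val < N + m then 1 else -1

/-- the involution `i ↦ i'`. -/
def dual (i : Fin (N + 2*m)) : Fin (N + 2*m) := i.rev

/-- the operator `e_{ij} ⊗ e_{kl}` on `ℂ^{N|2m} ⊗ ℂ^{N|2m}`. -/
def ST (i j k l : Fin (N + 2*m)) :
    Matrix (Fin (N + 2*m) × Fin (N + 2*m)) (Fin (N + 2*m) × Fin (N + 2*m)) ℂ :=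
  Matrix.of fun p q =>
    if p = (i, k) ∧ q = (j, l) then
      (-1 : ℂ) ^ ((pbar N m k + pbar N m l) * pbar N m j) else 0

/-- the index set `{2, …, 2'}`. -/
def mid : Finset (Fin (N + 2*m)) :=
  Finset.univ.filter fun i => 1 ≤ i.val ∧ i.val + 1 < N + 2*m

/-- the index `1` (0-based `0`). -/
def one' (h : 0 < N + 2*m) : Fin (N + 2*m) := ⟨0, h⟩

/-- `P = Σ_{i,j} e_{ij} ⊗ e_{ji} (−1)^{\bar j}`. -/
def Pop : Matrix (Fin (N + 2*m) × Fin (N + 2*m)) (Fin (N + 2*m) × Fin (N + 2*m)) ℂ :=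
  ∑ i : Fin (N + 2*m), ∑ j : Fin (N + 2*m),
    ((-1 : ℂ) ^ pbar N m j) • ST N m i j j i

/-- `Q = Σ_{i,j} e_{ij} ⊗ e_{i'j'} (−1)^{\bar i \bar j} θ_i θ_j`. -/
def Qop : Matrix (Fin (N + 2*m) × Fin (N + 2*m)) (Fin (N + 2*m) × Fin (N + 2*m)) ℂ :=
  ∑ i : Fin (N + 2*m), ∑ j : Fin (N + 2*m),
    ((-1 : ℂ) ^ (pbar N m i * pbar N m j) * th N m i * th N m j) •
      ST N m i j (dual N m i) (dual N m j)

/-- `Q̄ = Σ_{i,j=2}^{2'} e_{ij} ⊗ e_{i'j'} (−1)^{\bar i \bar j} θ_i θ_j`. -/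
def Qbar : Matrix (Fin (N + 2*m) × Fin (N + 2*m)) (Fin (N + 2*m) × Fin (N + 2*m)) ℂ :=
  ∑ i ∈ mid N m, ∑ j ∈ mid N m,
    ((-1 : ℂ) ^ (pbar N m i * pbar N m j) * th N m i * th N m j) •
      ST N m i j (dual N m i) (dual N m j)

/-- `K⁺ = Σ_{i=2}^{2'} e_{i1} ⊗ e_{i'1'} (−1)^{\bar i} θ_i`. -/
def Kplus (h : 0 < N + 2*m) :
    Matrix (Fin (N + 2*m) × Fin (N + 2*m)) (Fin (N + 2*m) × Fin (N + 2*m)) ℂ :=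
  ∑ i ∈ mid N m, ((-1 : ℂ) ^ pbar N m i * th N m i) •
    ST N m i (one' N m h) (dual N m i) (dual N m (one' N m h))

/-- `K⁻ = −Σ_{i=2}^{2'} e_{i1'} ⊗ e_{i'1} (−1)^{\bar i} θ_i`. -/
def Kminus (h : 0 < N + 2*m) :
    Matrix (Fin (N + 2*m) × Fin (N + 2*m)) (Fin (N + 2*m) × Fin (N + 2*m)) ℂ :=
  ∑ i ∈ mid N m, (-((-1 : ℂ) ^ pbar N m i * th N m i)) •
    ST N m i (dual N m (one' N m h)) (dual N m i) (one' N m h)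


/-! ### Auxiliary lemmas -/

lemma ST_eq (i j k l : Fin (N + 2*m)) :
    ST N m i j k l = Matrix.single (i, k) (j, l)
      ((-1 : ℂ) ^ ((pbar N m k + pbar N m l) * pbar N m j)) := by
  ext p q
  unfold ST Matrix.single
  simp only [Matrix.of_apply]
  by_cases h1 : p = (i, k) <;> by_cases h2 : q = (j, l) <;> simp [h1, h2, eq_comm]

lemma pbar_dual (i : Fin (N + 2*m)) : pbar N m (dual N m i) = pbar N m i := by
  have hi := i.isLt
  unfold pbar dual
  simp only [Fin.val_rev]
  split_ifs <;> omega

lemma pbar_one (hm : 1 ≤ m) (h : 0 < N + 2*m) : pbar N m (one' N m h) = 1 := by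
  unfold pbar one'
  rw [if_pos]
  exact Or.inl hm

lemma pbar_last (hm : 1 ≤ m) (h : 0 < N + 2*m) :
    pbar N m (dual N m (one' N m h)) = 1 := by
  rw [pbar_dual, pbar_one N m hm h]

lemma th_one (h : 0 < N + 2*m) (hm : 1 ≤ m) : th N m (one' N m h) = 1 := by
  unfold th one'
  rw [if_pos]
  show 0 < N + m
  omega

lemma th_last (hm : 1 ≤ m) (h : 0 < N + 2*m) :
    th N m (dual N m (one' N m h)) = -1 := by
  unfold th dual one'
  rw [if_neg]
  simp only [Fin.val_rev]
  omega

lemma dual_last (h : 0 < N + 2*m) :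
    dual N m (dual N m (one' N m h)) = one' N m h := Fin.rev_rev _

lemma one_ne_last (hm : 1 ≤ m) (h : 0 < N + 2*m) :
    one' N m h ≠ dual N m (one' N m h) := by
  intro hh
  have := congrArg Fin.val hh
  simp only [one', dual, Fin.val_rev] at this
  omega

lemma one_not_mid (h : 0 < N + 2*m) : one' N m h ∉ mid N m := by
  simp [mid, one']

lemma last_not_mid (h : 0 < N + 2*m) :
    dual N m (one' N m h) ∉ mid N m := by
  simp [mid, dual, one', Fin.val_rev]
  omega

lemma univ_eq (hm : 1 ≤ m) (h : 0 < N + 2*m) :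
    (Finset.univ : Finset (Fin (N + 2*m)))
      = insert (one' N m h) (insert (dual N m (one' N m h)) (mid N m)) := by
  ext x
  have hx := x.isLt
  simp only [Finset.mem_univ, Finset.mem_insert, mid, Finset.mem_filter, true_and,
    true_iff, Fin.ext_iff, one', dual, Fin.val_rev]
  omega

lemma sum_split (hm : 1 ≤ m) (h : 0 < N + 2*m) {M : Type*} [AddCommMonoid M]
    (f : Fin (N + 2*m) → M) :
    ∑ b, f b = (∑ b ∈ mid N m, f b) + f (one' N m h) + f (dual N m (one' N m h)) := by
  rw [univ_eq N m hm h, Finset.sum_insert, Finset.sum_insert (last_not_mid N m h)]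
  · abel
  · simp only [Finset.mem_insert]
    push_neg
    exact ⟨one_ne_last N m hm h, one_not_mid N m h⟩

lemma key1 (hm : 1 ≤ m) (h : 0 < N + 2*m)
    (r : Fin (N + 2*m) × Fin (N + 2*m)) (c : ℂ) :
    Matrix.single r (one' N m h, dual N m (one' N m h)) c * Pop N m
      = Matrix.single r (dual N m (one' N m h), one' N m h) (-c) := by
  unfold Pop
  rw [Finset.mul_sum, Finset.sum_eq_single (one' N m h)]
  · rw [Finset.mul_sum, Finset.sum_eq_single (dual N m (one' N m h))]
    · rw [ST_eq, mul_smul_comm, Matrix.single_mul_single_same, Matrix.smul_single]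
      congr 1
      rw [pbar_last N m hm h, pbar_one N m hm h]
      norm_num
    · intro b _ hb
      rw [ST_eq, mul_smul_comm, Matrix.single_mul_single_of_ne, smul_zero]
      exact fun hh => hb (congrArg Prod.snd hh).symm
    · intro hh
      exact absurd (Finset.mem_univ _) hh
  · intro a _ ha
    rw [Finset.mul_sum]
    refine Finset.sum_eq_zero fun b _ => ?_
    rw [ST_eq, mul_smul_comm, Matrix.single_mul_single_of_ne, smul_zero]
    exact fun hh => ha (congrArg Prod.fst hh).symm
  · intro hh
    exact absurd (Finset.mem_univ _) hh

lemma key2 (hm : 1 ≤ m) (h : 0 < N + 2*m)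
    (r : Fin (N + 2*m) × Fin (N + 2*m)) (c : ℂ) :
    Matrix.single r (one' N m h, dual N m (one' N m h)) c * Qop N m
      = ∑ b, ((-1 : ℂ) ^ (pbar N m (one' N m h) * pbar N m b)
          * th N m (one' N m h) * th N m b) •
          Matrix.single r (b, dual N m b)
            (c * (-1 : ℂ) ^ ((pbar N m (dual N m (one' N m h)) + pbar N m (dual N m b))
              * pbar N m b)) := by
  unfold Qop
  rw [Finset.mul_sum, Finset.sum_eq_single (one' N m h)]
  · rw [Finset.mul_sum]
    refine Finset.sum_congr rfl fun b _ => ?_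
    rw [ST_eq, mul_smul_comm, Matrix.single_mul_single_same]
  · intro a _ ha
    rw [Finset.mul_sum]
    refine Finset.sum_eq_zero fun b _ => ?_
    rw [ST_eq, mul_smul_comm, Matrix.single_mul_single_of_ne, smul_zero]
    exact fun hh => ha (congrArg Prod.fst hh).symm
  · intro hh
    exact absurd (Finset.mem_univ _) hh

lemma neg_stdBasis {α β : Type*} [DecidableEq α] [DecidableEq β] (i : α) (j : β) (c : ℂ) :
    -Matrix.single i j c = Matrix.single i j (-c) := by
  rw [← neg_one_smul ℂ (Matrix.single i j c), Matrix.smul_single]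
  norm_num

lemma pbar_cases (i : Fin (N + 2*m)) : pbar N m i = 0 ∨ pbar N m i = 1 := by
  unfold pbar
  split_ifs <;> simp

theorem KplusP_and_KplusQ (hN : 3 ≤ N) (hm : 1 ≤ m) (h : 0 < N + 2*m) :
    Kplus N m h * Pop N m = Kminus N m h ∧
    Kplus N m h * Qop N m = -(Qbar N m) - (Kplus N m h + Kminus N m h) := by
  constructor
  · unfold Kplus Kminus
    rw [Finset.sum_mul]
    refine Finset.sum_congr rfl fun i hi => ?_
    simp only [ST_eq, smul_mul_assoc]
    rw [key1 N m hm h]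
    simp only [Matrix.smul_single]
    congr 1
    simp only [pbar_dual, pbar_one N m hm h, smul_eq_mul]
    ring
  · unfold Kplus Kminus Qbar
    rw [Finset.sum_mul, sub_eq_add_neg, neg_add, ← Finset.sum_neg_distrib,
      ← Finset.sum_neg_distrib, ← Finset.sum_neg_distrib, ← Finset.sum_add_distrib,
      ← Finset.sum_add_distrib]
    refine Finset.sum_congr rfl fun i hi => ?_
    rw [ST_eq, smul_mul_assoc, key2 N m hm h, Finset.smul_sum,
      sum_split N m hm h (M := Matrix (Fin (N + 2*m) × Fin (N + 2*m)) (Fin (N + 2*m) × Fin (N + 2*m)) ℂ)]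
    simp only [dual_last N m h]
    rw [← Finset.sum_neg_distrib, ← add_assoc]
    congr 1
    congr 1
    · refine Finset.sum_congr rfl fun j _ => ?_
      simp only [ST_eq, smul_smul, Matrix.smul_single, ← neg_smul, smul_eq_mul]
      congr 1
      simp only [pbar_dual, pbar_one N m hm h, th_one N m h hm]
      rcases pbar_cases N m i with hp | hp <;> rcases pbar_cases N m j with hq | hq <;>
        rw [hp, hq] <;> norm_num [neg_stdBasis]
    · simp only [ST_eq, smul_smul, Matrix.smul_single, ← neg_smul, smul_eq_mul]
      congr 1
      simp only [pbar_dual, pbar_one N m hm h, th_one N m h hm]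
      rcases pbar_cases N m i with hp | hp <;> rw [hp] <;> norm_num [neg_stdBasis]
    · simp only [ST_eq, smul_smul, Matrix.smul_single, ← neg_smul, smul_eq_mul]
      congr 1
      simp only [pbar_dual, pbar_one N m hm h, th_one N m h hm, th_last N m hm h]
      rcases pbar_cases N m i with hp | hp <;> rw [hp] <;> norm_num [neg_stdBasis]

end OSp
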